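/- arXiv:2301.07875 — 2 statements merged into one kernel-verified Lean document; each statement's English description precedes it below -/
import Mathlib

section
/- Let $k, \tau, \lambda$ be real numbers with $\tau \geq 1$ and $k^2 + \tau^2 - \lambda^2 \geq 1$, and let $s = \sqrt{k^2 + (\tau + i\lambda)^2}$ (principal branch). Then $|\mathrm{Im}\, s| \leq \sqrt{5}\, |\lambda|$. -/
/-! Every square root `s` of `z` satisfies `2 (Im s)² = ‖z‖ - Re z`. For `z = k² + w²` with `k`
real, `‖z‖ - Re z ≤ 2 (Im w)²` because `(Im z)² = 4 (Re w)² (Im w)²` is at most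
`(Re z + 2 (Im w)²)² - (Re z)²`. Hence `|Im s| ≤ |Im w|`, and `Im (τ + iλ) = λ`. -/

namespace Complex

theorem two_mul_im_sq_eq_norm_sub_re {s z : ℂ} (h : s ^ 2 = z) :
    2 * s.im ^ 2 = ‖z‖ - z.re := by
  have hnorm : s.re ^ 2 + s.im ^ 2 = ‖z‖ := by
    rw [← h, norm_pow, Complex.sq_norm, normSq_apply]
    ring
  have hre : s.re ^ 2 - s.im ^ 2 = z.re := by
    rw [← h]
    simp only [sq, mul_re]
  linarith

theorem norm_le_re_add {z : ℂ} {c : ℝ} (hc : 0 ≤ z.re + c)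
    (h : z.im ^ 2 ≤ 2 * c * z.re + c ^ 2) : ‖z‖ ≤ z.re + c := by
  rw [norm_def, Real.sqrt_le_iff, normSq_apply]
  exact ⟨hc, by nlinarith⟩

theorem abs_im_le_of_sq_eq_ofReal_sq_add_sq {s w : ℂ} (k : ℝ) (h : s ^ 2 = (k : ℂ) ^ 2 + w ^ 2) :
    |s.im| ≤ |w.im| := by
  set z : ℂ := (k : ℂ) ^ 2 + w ^ 2
  have hre : z.re = k ^ 2 + w.re ^ 2 - w.im ^ 2 := by
    simp only [z, sq, add_re, mul_re, ofReal_re, ofReal_im]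
    ring
  have him : z.im = 2 * w.re * w.im := by
    simp only [z, sq, add_im, mul_im, ofReal_re, ofReal_im]
    ring
  have hnorm : ‖z‖ ≤ z.re + 2 * w.im ^ 2 :=
    norm_le_re_add (by rw [hre]; nlinarith [sq_nonneg k, sq_nonneg w.re])
      (by rw [hre, him]; nlinarith [sq_nonneg (k * w.im)])
  have him_sq : s.im ^ 2 ≤ w.im ^ 2 := by
    linarith [two_mul_im_sq_eq_norm_sub_re h]
  exact sq_le_sq.mp him_sq

end Complex

theorem stmt_1_general (k τ l : ℝ) :
    |((((k : ℂ) ^ 2 + ((τ : ℂ) + (l : ℂ) * Complex.I) ^ 2)) ^ ((1 : ℂ) / 2)).im| ≤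
      Real.sqrt 5 * |l| := by
  have hsq : (((k : ℂ) ^ 2 + ((τ : ℂ) + (l : ℂ) * Complex.I) ^ 2) ^ ((1 : ℂ) / 2)) ^ 2 =
      (k : ℂ) ^ 2 + ((τ : ℂ) + (l : ℂ) * Complex.I) ^ 2 := by
    rw [one_div]
    exact Complex.cpow_nat_inv_pow _ two_ne_zero
  have hbound := Complex.abs_im_le_of_sq_eq_ofReal_sq_add_sq k hsq
  have hw : ((τ : ℂ) + (l : ℂ) * Complex.I).im = l := by simp
  rw [hw] at hbound
  exact hbound.trans (le_mul_of_one_le_left (abs_nonneg l) (Real.one_le_sqrt.mpr (by norm_num)))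

theorem stmt_1 (k τ l : ℝ) (hτ : 1 ≤ τ) (h : 1 ≤ k ^ 2 + τ ^ 2 - l ^ 2) :
    |((((k : ℂ) ^ 2 + ((τ : ℂ) + (l : ℂ) * Complex.I) ^ 2)) ^ ((1 : ℂ) / 2)).im| ≤
      Real.sqrt 5 * |l| :=
  stmt_1_general k τ l
end

section
/- Let $z \in \mathbb{C}$ with $\mathrm{Re}\, z > 0$ and let $\delta > 1/2$. For $f$ with $\langle t\rangle^{\delta} f \in L^2(\mathbb{R})$, define $u(x) = -\int_x^\infty f(t) e^{-z(t-x)}\,\mathrm{d}t$. Then there is a constant $C_\delta$, depending only on $\delta$, such that $\|\langle t\rangle^{-\delta} u\|_{L^2(\mathbb{R})} \leq C_\delta \|\langle t\rangle^{\delta} f\|_{L^2(\mathbb{R})}$. -/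
/-!
Since `Re z ≥ 0`, the kernel `e^{-z(t-x)}` has modulus at most one for `t ≥ x`, so
`‖u‖_∞ ≤ ‖f‖_{L¹}`. Integrating `‖u‖²` against the integrable weight `⟨x⟩^{-2δ}` gives
`‖⟨x⟩^{-δ} u‖_{L²} ≤ c ‖f‖_{L¹}` with `c² = ∫ ⟨t⟩^{-2δ}`, and Cauchy–Schwarz applied to
`|f| = ⟨t⟩^{-δ} · ⟨t⟩^{δ}|f|` gives `‖f‖_{L¹} ≤ c ‖⟨t⟩^{δ} f‖_{L²}`; hence `C = c²`.
-/

open MeasureTheory Real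

section WeightedCauchySchwarz

variable {α : Type*} [MeasurableSpace α] {μ : Measure α}

lemma memLp_two_sqrt_of_integrable {h : α → ℝ} (hh : Integrable h μ) (h0 : ∀ x, 0 ≤ h x) :
    MemLp (fun x => √(h x)) 2 μ := by
  rw [memLp_two_iff_integrable_sq (continuous_sqrt.comp_aestronglyMeasurable hh.1)]
  exact hh.congr (.of_forall fun x => (sq_sqrt (h0 x)).symm)

lemma sqrt_inv_mul_sqrt_mul_sq {w g : ℝ} (hw : 0 < w) (hg : 0 ≤ g) :
    √w⁻¹ * √(w * g ^ 2) = g := by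
  rw [← sqrt_mul (inv_nonneg.2 hw.le), inv_mul_cancel_left₀ hw.ne', sqrt_sq hg]

lemma integrable_of_integrable_inv_of_integrable_mul_sq {w g : α → ℝ} (hw : ∀ x, 0 < w x)
    (hg : ∀ x, 0 ≤ g x) (hwinv : Integrable (fun x => (w x)⁻¹) μ)
    (hwg : Integrable (fun x => w x * g x ^ 2) μ) : Integrable g μ := by
  have := (memLp_two_sqrt_of_integrable hwinv fun x => (inv_pos.2 (hw x)).le).integrable_mul
    (memLp_two_sqrt_of_integrable hwg fun x => mul_nonneg (hw x).le (sq_nonneg (g x)))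
  exact this.congr (.of_forall fun x => sqrt_inv_mul_sqrt_mul_sq (hw x) (hg x))

lemma integral_le_sqrt_integral_inv_mul_sqrt_integral_mul_sq {w g : α → ℝ} (hw : ∀ x, 0 < w x)
    (hg : ∀ x, 0 ≤ g x) (hwinv : Integrable (fun x => (w x)⁻¹) μ)
    (hwg : Integrable (fun x => w x * g x ^ 2) μ) :
    ∫ x, g x ∂μ ≤ √(∫ x, (w x)⁻¹ ∂μ) * √(∫ x, w x * g x ^ 2 ∂μ) := by
  have h2 : ENNReal.ofReal 2 = 2 := by norm_num
  have holder := integral_mul_le_Lp_mul_Lq_of_nonneg HolderConjugate.two_two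
    (.of_forall fun x => sqrt_nonneg _) (.of_forall fun x => sqrt_nonneg _)
    (h2 ▸ memLp_two_sqrt_of_integrable hwinv fun x => (inv_pos.2 (hw x)).le)
    (h2 ▸ memLp_two_sqrt_of_integrable hwg fun x => mul_nonneg (hw x).le (sq_nonneg (g x)))
  simpa only [sqrt_inv_mul_sqrt_mul_sq (hw _) (hg _), rpow_two, ← sqrt_eq_rpow,
    sq_sqrt (inv_nonneg.2 (hw _).le), sq_sqrt (mul_nonneg (hw _).le (sq_nonneg (g _)))] using holder

end WeightedCauchySchwarz

lemma norm_cexp_neg_mul_sub_le_one {z : ℂ} (hz : 0 ≤ z.re) {x t : ℝ} (hxt : x ≤ t) :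
    ‖Complex.exp (-z * (t - x))‖ ≤ 1 := by
  rw [Complex.norm_exp, exp_le_one_iff]
  have : (-z * (t - x)).re = -(z.re * (t - x)) := by simp [Complex.mul_re]
  rw [this, neg_nonpos]
  exact mul_nonneg hz (sub_nonneg.2 hxt)

lemma norm_setIntegral_Ioi_mul_cexp_le {f : ℝ → ℂ} (hf : Integrable (fun t => ‖f t‖))
    {z : ℂ} (hz : 0 ≤ z.re) (x : ℝ) :
    ‖∫ t in Set.Ioi x, f t * Complex.exp (-z * (t - x))‖ ≤ ∫ t, ‖f t‖ :=
  calc ‖∫ t in Set.Ioi x, f t * Complex.exp (-z * (t - x))‖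
      ≤ ∫ t in Set.Ioi x, ‖f t * Complex.exp (-z * (t - x))‖ := norm_integral_le_integral_norm _
    _ ≤ ∫ t in Set.Ioi x, ‖f t‖ := by
      refine integral_mono_of_nonneg (.of_forall fun t => norm_nonneg _) hf.integrableOn ?_
      filter_upwards [ae_restrict_mem measurableSet_Ioi] with t ht
      rw [norm_mul]
      exact mul_le_of_le_one_right (norm_nonneg _) (norm_cexp_neg_mul_sub_le_one hz ht.le)
    _ ≤ ∫ t, ‖f t‖ := setIntegral_le_integral hf (.of_forall fun t => norm_nonneg _)

lemma integral_mul_norm_sq_le_of_norm_le {α E : Type*} [MeasurableSpace α] {μ : Measure α}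
    [NormedAddCommGroup E] {v : α → ℝ} {u : α → E} {M : ℝ} (hv : ∀ x, 0 ≤ v x)
    (hvi : Integrable v μ) (hu : ∀ x, ‖u x‖ ≤ M) :
    ∫ x, v x * ‖u x‖ ^ 2 ∂μ ≤ (∫ x, v x ∂μ) * M ^ 2 := by
  rw [← integral_mul_const]
  refine integral_mono_of_nonneg (.of_forall fun x => mul_nonneg (hv x) (sq_nonneg _))
    (hvi.mul_const _) (.of_forall fun x => ?_)
  exact mul_le_mul_of_nonneg_left (pow_le_pow_left₀ (norm_nonneg _) (hu x) 2) (hv x)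

lemma integrable_one_add_sq_rpow_neg {δ : ℝ} (hδ : 1 / 2 < δ) :
    Integrable (fun t : ℝ => (1 + t ^ 2) ^ (-δ)) := by
  have := integrable_rpow_neg_one_add_norm_sq (E := ℝ) (μ := volume) (r := 2 * δ)
    (by rw [Module.finrank_self, Nat.cast_one]; linarith)
  refine this.congr (.of_forall fun t => ?_)
  simp [norm_eq_abs, sq_abs, neg_div, mul_div_cancel_left₀]

theorem stmt_10 (δ : ℝ) (hδ : 1 / 2 < δ) :
    ∃ C : ℝ, ∀ (z : ℂ), 0 < z.re → ∀ f : ℝ → ℂ,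
      AEStronglyMeasurable f (volume : Measure ℝ) →
      Integrable (fun t : ℝ => (1 + t ^ 2) ^ δ * ‖f t‖ ^ 2) →
      Real.sqrt (∫ x : ℝ, (1 + x ^ 2) ^ (-δ) *
          ‖-(∫ t in Set.Ioi x, f t * Complex.exp (-z * (t - x)))‖ ^ 2) ≤
        C * Real.sqrt (∫ t : ℝ, (1 + t ^ 2) ^ δ * ‖f t‖ ^ 2) := by
  have hw : ∀ t : ℝ, 0 < (1 + t ^ 2) ^ δ := fun t => by positivity
  have hwinv : ∀ t : ℝ, ((1 + t ^ 2) ^ δ)⁻¹ = (1 + t ^ 2) ^ (-δ) := fun t =>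
    (rpow_neg (by positivity) δ).symm
  have hI := integrable_one_add_sq_rpow_neg hδ
  have hIw : Integrable fun t : ℝ => ((1 + t ^ 2) ^ δ)⁻¹ := by simpa only [hwinv] using hI
  refine ⟨∫ t : ℝ, (1 + t ^ 2) ^ (-δ), fun z hz f _ hfw => ?_⟩
  set I := ∫ t : ℝ, (1 + t ^ 2) ^ (-δ)
  set N := ∫ t : ℝ, (1 + t ^ 2) ^ δ * ‖f t‖ ^ 2
  have hf : Integrable fun t => ‖f t‖ :=
    integrable_of_integrable_inv_of_integrable_mul_sq hw (fun t => norm_nonneg _) hIw hfw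
  have hfL1 : ∫ t, ‖f t‖ ≤ √I * √N := by
    simpa only [hwinv] using
      integral_le_sqrt_integral_inv_mul_sqrt_integral_mul_sq hw (fun t => norm_nonneg _) hIw hfw
  have hu := integral_mul_norm_sq_le_of_norm_le (fun t => by positivity) hI fun x =>
    (norm_neg _).trans_le (norm_setIntegral_Ioi_mul_cexp_le hf hz.le x)
  have hI0 : 0 ≤ I := integral_nonneg fun t => by positivity
  calc _ ≤ √(I * (∫ t, ‖f t‖) ^ 2) := sqrt_le_sqrt hu
    _ = √I * ∫ t, ‖f t‖ := by rw [sqrt_mul hI0, sqrt_sq (integral_nonneg fun t => norm_nonneg _)]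
    _ ≤ √I * (√I * √N) := by gcongr
    _ = I * √N := by rw [← mul_assoc, mul_self_sqrt hI0]
end
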